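/- The curvature K(t) = g''(t)/(1+g'(t)²)^{3/2} of the curve Γ_g satisfies: K(t) = (1/(π√(1−t²))) · (1 + (arccos(t)/π)²)^{−3/2} for every t ∈ (−1,1); K is bounded below on (−1,1) by a positive constant; and K(t) → +∞ as t → −1⁺ and as t → 1⁻. -/

import Mathlib

open Real Set Filter

noncomputable def gfun (t : ℝ) : ℝ := (Real.sqrt (1 - t^2) - t * Real.arccos t) / Real.pi

noncomputable def Kcurv (t : ℝ) : ℝ :=
  deriv (deriv gfun) t / (1 + (deriv gfun t)^2) ^ ((3:ℝ)/2)

/-!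
Differentiating twice, `g' = -arccos t / π` and `g'' = 1 / (π √(1 - t²))`, which gives the
formula. Since `0 ≤ arccos t ≤ π`, the factor `(1 + (arccos t / π)²)^(-3/2)` lies between
`2^(-3/2)` and `1`, so `K t ≥ 2^(-3/2) / (π √(1 - t²))`: this is at least `2^(-3/2) / π` and
tends to `+∞` at `t = ±1`.
-/

lemma one_sub_sq_pos_of_mem_Ioo {t : ℝ} (ht : t ∈ Ioo (-1:ℝ) 1) : 0 < 1 - t ^ 2 := by
  nlinarith [ht.1, ht.2]

lemma hasDerivAt_gfun {t : ℝ} (ht : t ∈ Ioo (-1:ℝ) 1) :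
    HasDerivAt gfun (-arccos t / π) t := by
  have hsq : HasDerivAt (fun x : ℝ => 1 - x ^ 2) (-(2 * t)) t := by
    simpa using (hasDerivAt_pow 2 t).const_sub 1
  have hsqrt := hsq.sqrt (one_sub_sq_pos_of_mem_Ioo ht).ne'
  have hmul := (hasDerivAt_id' t).mul (hasDerivAt_arccos ht.1.ne' ht.2.ne)
  refine ((hsqrt.sub hmul).div_const π).congr_deriv ?_
  field_simp
  ring

lemma deriv_gfun_eqOn : EqOn (deriv gfun) (fun t => -arccos t / π) (Ioo (-1) 1) :=
  fun _ ht => (hasDerivAt_gfun ht).deriv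

lemma hasDerivAt_deriv_gfun {t : ℝ} (ht : t ∈ Ioo (-1:ℝ) 1) :
    HasDerivAt (deriv gfun) (1 / (π * sqrt (1 - t ^ 2))) t := by
  have h := ((hasDerivAt_arccos ht.1.ne' ht.2.ne).neg).div_const π
  have heq : deriv gfun =ᶠ[nhds t] fun x => -arccos x / π :=
    eventuallyEq_of_mem (isOpen_Ioo.mem_nhds ht) deriv_gfun_eqOn
  refine (h.congr_of_eventuallyEq heq).congr_deriv ?_
  field_simp

lemma Kcurv_eq {t : ℝ} (ht : t ∈ Ioo (-1:ℝ) 1) :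
    Kcurv t = (1 / (π * sqrt (1 - t ^ 2))) * (1 + (arccos t / π) ^ 2) ^ (-(3:ℝ)/2) := by
  have hA : (0:ℝ) < 1 + (arccos t / π) ^ 2 := by positivity
  rw [Kcurv, (hasDerivAt_deriv_gfun ht).deriv, (hasDerivAt_gfun ht).deriv, neg_div, neg_sq,
    neg_div, rpow_neg hA.le, div_eq_mul_inv]

lemma two_rpow_le_one_add_sq_arccos_div_pi_rpow (t : ℝ) :
    (2:ℝ) ^ (-(3:ℝ)/2) ≤ (1 + (arccos t / π) ^ 2) ^ (-(3:ℝ)/2) := by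
  have h0 : 0 ≤ arccos t / π := div_nonneg (arccos_nonneg t) pi_pos.le
  have h1 : arccos t / π ≤ 1 := (div_le_one pi_pos).mpr (arccos_le_pi t)
  exact rpow_le_rpow_of_nonpos (by positivity) (by nlinarith) (by norm_num)

lemma le_Kcurv {t : ℝ} (ht : t ∈ Ioo (-1:ℝ) 1) :
    (2:ℝ) ^ (-(3:ℝ)/2) / π * (sqrt (1 - t ^ 2))⁻¹ ≤ Kcurv t := by
  calc (2:ℝ) ^ (-(3:ℝ)/2) / π * (sqrt (1 - t ^ 2))⁻¹
      = 1 / (π * sqrt (1 - t ^ 2)) * (2:ℝ) ^ (-(3:ℝ)/2) := by field_simp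
    _ ≤ 1 / (π * sqrt (1 - t ^ 2)) * (1 + (arccos t / π) ^ 2) ^ (-(3:ℝ)/2) :=
      mul_le_mul_of_nonneg_left (two_rpow_le_one_add_sq_arccos_div_pi_rpow t) (by positivity)
    _ = Kcurv t := (Kcurv_eq ht).symm

lemma one_le_inv_sqrt_one_sub_sq {t : ℝ} (ht : t ∈ Ioo (-1:ℝ) 1) :
    1 ≤ (sqrt (1 - t ^ 2))⁻¹ := by
  have hs : 0 < sqrt (1 - t ^ 2) := sqrt_pos.mpr (one_sub_sq_pos_of_mem_Ioo ht)
  exact (one_le_inv₀ hs).mpr (sqrt_le_one.mpr (by nlinarith))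

lemma tendsto_inv_sqrt_one_sub_sq_atTop {a : ℝ} (ha : a ^ 2 = 1) :
    Tendsto (fun t : ℝ => (sqrt (1 - t ^ 2))⁻¹) (nhdsWithin a (Ioo (-1) 1)) atTop := by
  have hcont : Tendsto (fun t : ℝ => sqrt (1 - t ^ 2)) (nhdsWithin a (Ioo (-1) 1)) (nhds 0) := by
    have h := ((by fun_prop : Continuous fun t : ℝ => sqrt (1 - t ^ 2)).tendsto a).mono_left
      (nhdsWithin_le_nhds (s := Ioo (-1) 1))
    rwa [ha, sub_self, sqrt_zero] at h
  refine Tendsto.inv_tendsto_nhdsGT_zero (tendsto_nhdsWithin_iff.mpr ⟨hcont, ?_⟩)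
  filter_upwards [self_mem_nhdsWithin] with t ht
  exact sqrt_pos.mpr (one_sub_sq_pos_of_mem_Ioo ht)

lemma tendsto_Kcurv_atTop {a : ℝ} (ha : a ^ 2 = 1) :
    Tendsto Kcurv (nhdsWithin a (Ioo (-1) 1)) atTop := by
  have hc : (0:ℝ) < (2:ℝ) ^ (-(3:ℝ)/2) / π := by positivity
  refine tendsto_atTop_mono' _ ?_ ((tendsto_inv_sqrt_one_sub_sq_atTop ha).const_mul_atTop hc)
  filter_upwards [self_mem_nhdsWithin] with t ht
  exact le_Kcurv ht

theorem curvature_formula_and_blowup :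
    (∀ t ∈ Set.Ioo (-1:ℝ) 1,
      Kcurv t = (1 / (Real.pi * Real.sqrt (1 - t^2))) *
        (1 + (Real.arccos t / Real.pi)^2) ^ (-(3:ℝ)/2)) ∧
    (∃ c : ℝ, 0 < c ∧ ∀ t ∈ Set.Ioo (-1:ℝ) 1, c ≤ Kcurv t) ∧
    Filter.Tendsto Kcurv (nhdsWithin (-1) (Set.Ioo (-1:ℝ) 1)) Filter.atTop ∧
    Filter.Tendsto Kcurv (nhdsWithin 1 (Set.Ioo (-1:ℝ) 1)) Filter.atTop := by
  have hc : (0:ℝ) < (2:ℝ) ^ (-(3:ℝ)/2) / π := by positivity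
  refine ⟨fun t ht => Kcurv_eq ht, ⟨_, hc, fun t ht => ?_⟩,
    tendsto_Kcurv_atTop (by norm_num), tendsto_Kcurv_atTop (by norm_num)⟩
  calc (2:ℝ) ^ (-(3:ℝ)/2) / π
      ≤ (2:ℝ) ^ (-(3:ℝ)/2) / π * (sqrt (1 - t ^ 2))⁻¹ :=
        le_mul_of_one_le_right hc.le (one_le_inv_sqrt_one_sub_sq ht)
    _ ≤ Kcurv t := le_Kcurv ht
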